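/- Let n ≥ 2, δ ∈ (0, 1/n²], and for k ≥ 2 let there be at most C(n)(k!)^{n-1} balls of radius 2^{-k-2}(k!)^{-n} each, centered on the sphere of radius 1 - 2^{-k}. Let D be their union. Then for every z with |z| = 1, |D ∩ B(z,r)| / |B(z,r)| → 0 as r → 0⁺; consequently every boundary point of the unit sphere has Lebesgue density 0 for D. -/

import Mathlib

open MeasureTheory Metric Set Filter Nat

/-!
A ball of generation `k` has radius at most `2^{-k}/4` and its centre lies at distance `2^{-k}`
from the unit sphere, so it can meet `B(z, r)` with `|z| = 1` only if `2^{-k} < 2r`. For such `k`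
the whole generation has volume at most `C (k!)^{n-1} (2^{-k}/4)^n (k!)^{-n²} |B(0,1)|`, which is
`≤ (C / k!) |B(z, r)|` because `n - 1 - n² ≤ -1`. Hence `|D ∩ B(z, r)| / |B(z, r)|` is bounded by
the tail `∑_{k ≥ m} C / k!` of a convergent series, where `m → ∞` as `r → 0`.
-/

lemma pow_pred_mul_zpow_neg_pow_le_inv {x : ℝ} (hx : 1 ≤ x) {n : ℕ} (hn : 1 ≤ n) :
    x ^ (n - 1) * (x ^ (-(n : ℤ))) ^ n ≤ x⁻¹ := by
  rw [← zpow_natCast (x ^ _), ← zpow_mul, ← zpow_natCast x, ← zpow_add₀ (by positivity),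
    ← zpow_neg_one]
  apply zpow_le_zpow_right₀ hx
  push_cast [Nat.cast_sub hn]
  nlinarith

lemma card_mul_pow_le_of_le_mul_pow_pred {N n : ℕ} {C x t s : ℝ} (hn : 1 ≤ n) (hx : 1 ≤ x)
    (ht : 0 ≤ t) (hts : t ≤ s) (hN : (N : ℝ) ≤ C * x ^ (n - 1)) :
    N * (t * x ^ (-(n : ℤ))) ^ n ≤ C / x * s ^ n := by
  have hC : 0 ≤ C := nonneg_of_mul_nonneg_left ((Nat.cast_nonneg N).trans hN) (by positivity)
  calc (N : ℝ) * (t * x ^ (-(n : ℤ))) ^ n ≤ C * x ^ (n - 1) * (t * x ^ (-(n : ℤ))) ^ n := by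
        gcongr
    _ = C * t ^ n * (x ^ (n - 1) * (x ^ (-(n : ℤ))) ^ n) := by ring
    _ ≤ C * t ^ n * x⁻¹ := by gcongr; exact pow_pred_mul_zpow_neg_pow_le_inv hx hn
    _ = C / x * t ^ n := by ring
    _ ≤ C / x * s ^ n := by gcongr

lemma measure_iUnion_closedBall_le {E : Type*} [NormedAddCommGroup E] [NormedSpace ℝ E]
    [MeasurableSpace E] [BorelSpace E] [FiniteDimensional ℝ E] (μ : Measure E)
    [μ.IsAddHaarMeasure] {ι : Type*} [Fintype ι] (x : ι → E) {ρ : ℝ} (hρ : 0 ≤ ρ) :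
    μ (⋃ i, closedBall (x i) ρ) ≤
      ENNReal.ofReal (Fintype.card ι * ρ ^ Module.finrank ℝ E) * μ (ball 0 1) := by
  calc μ (⋃ i, closedBall (x i) ρ) ≤ ∑ i, μ (closedBall (x i) ρ) := measure_iUnion_fintype_le _ _
    _ = _ := by
      simp [Measure.addHaar_closedBall μ _ hρ, ENNReal.ofReal_mul, mul_assoc]

lemma norm_sub_norm_lt_of_closedBall_inter_ball_nonempty {E : Type*} [SeminormedAddCommGroup E]
    {c z : E} {ρ r : ℝ} (h : (closedBall c ρ ∩ ball z r).Nonempty) : ‖z‖ - ‖c‖ < ρ + r := by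
  by_contra! hle
  refine h.ne_empty (closedBall_disjoint_ball ?_).inter_eq
  rw [_root_.dist_comm, dist_eq_norm]
  exact hle.trans (norm_sub_norm_le z c)

noncomputable def layerRadius (n k : ℕ) : ℝ := 2 ^ (-(k : ℤ) - 2) * (k ! : ℝ) ^ (-(n : ℤ))

lemma layerRadius_eq (n k : ℕ) :
    layerRadius n k = 2 ^ (-(k : ℤ)) / 4 * (k ! : ℝ) ^ (-(n : ℤ)) := by
  rw [layerRadius, zpow_sub₀ two_ne_zero]
  norm_num

lemma layerRadius_nonneg (n k : ℕ) : 0 ≤ layerRadius n k := by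
  unfold layerRadius
  positivity

lemma layerRadius_le (n k : ℕ) : layerRadius n k ≤ 2 ^ (-(k : ℤ)) / 4 := by
  rw [layerRadius_eq]
  refine mul_le_of_le_one_right (by positivity) (zpow_le_one_of_nonpos₀ ?_ (by omega))
  exact_mod_cast k.factorial_pos

section Layers

variable {n : ℕ} {N : ℕ → ℕ} (c : (k : ℕ) → Fin (N k) → EuclideanSpace ℝ (Fin n)) {k : ℕ}
  {z : EuclideanSpace ℝ (Fin n)} {r : ℝ}

noncomputable def ballLayer (k : ℕ) : Set (EuclideanSpace ℝ (Fin n)) :=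
  ⋃ i, closedBall (c k i) (layerRadius n k)

lemma two_zpow_neg_lt_of_ballLayer_inter_ball_nonempty (hz : ‖z‖ = 1)
    (hc : ∀ i, ‖c k i‖ = 1 - 2 ^ (-(k : ℤ)))
    (h : (ballLayer c k ∩ ball z r).Nonempty) :
    (2 : ℝ) ^ (-(k : ℤ)) < 2 * r := by
  obtain ⟨x, hx, hxz⟩ := h
  obtain ⟨i, hxi⟩ := mem_iUnion.1 hx
  have hdist := norm_sub_norm_lt_of_closedBall_inter_ball_nonempty ⟨x, hxi, hxz⟩
  rw [hz, hc i] at hdist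
  linarith [layerRadius_le n k, zpow_pos (two_pos (α := ℝ)) (-(k : ℤ))]

lemma volume_ballLayer_le (hn : 1 ≤ n) {C : ℝ} (hN : (N k : ℝ) ≤ C * (k ! : ℝ) ^ (n - 1))
    (hr : (2 : ℝ) ^ (-(k : ℤ)) / 4 < r) :
    volume (ballLayer c k) ≤
      ENNReal.ofReal (C / k !) * volume (ball z r) := by
  have hk : (1 : ℝ) ≤ k ! := by exact_mod_cast k.factorial_pos
  have hr0 : 0 < r := (by positivity : (0 : ℝ) < 2 ^ (-(k : ℤ)) / 4).trans hr
  calc volume (ballLayer c k)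
      ≤ ENNReal.ofReal (N k * layerRadius n k ^ n) *
          volume (ball (0 : EuclideanSpace ℝ (Fin n)) 1) := by
        simpa [ballLayer] using measure_iUnion_closedBall_le volume (c k) (layerRadius_nonneg n k)
    _ ≤ ENNReal.ofReal (C / k ! * r ^ n) * volume (ball (0 : EuclideanSpace ℝ (Fin n)) 1) := by
        gcongr ENNReal.ofReal ?_ * _
        rw [layerRadius_eq]
        exact card_mul_pow_le_of_le_mul_pow_pred hn hk (by positivity) hr.le hN
    _ = ENNReal.ofReal (C / k !) * volume (ball z r) := by
        rw [Measure.addHaar_ball_of_pos _ _ hr0, finrank_euclideanSpace_fin,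
          ENNReal.ofReal_mul' (by positivity), mul_assoc]

lemma volume_ballLayer_inter_ball_le (hn : 1 ≤ n) {C : ℝ} (hN : (N k : ℝ) ≤ C * (k ! : ℝ) ^ (n - 1))
    (hz : ‖z‖ = 1) (hc : ∀ i, ‖c k i‖ = 1 - 2 ^ (-(k : ℤ))) :
    volume (ballLayer c k ∩ ball z r) ≤
      ENNReal.ofReal (C / k !) * volume (ball z r) := by
  rcases Set.eq_empty_or_nonempty (ballLayer c k ∩ ball z r)
    with hempty | hmeets
  · simp [hempty]
  · have hk := two_zpow_neg_lt_of_ballLayer_inter_ball_nonempty c hz hc hmeets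
    refine (measure_mono inter_subset_left).trans (volume_ballLayer_le c hn hN ?_)
    linarith [zpow_pos (two_pos (α := ℝ)) (-(k : ℤ))]

lemma volume_biUnion_ballLayer_inter_ball_le (hn : 1 ≤ n) {C : ℝ}
    (hN : ∀ k : ℕ, (N k : ℝ) ≤ C * (k ! : ℝ) ^ (n - 1))
    (hc : ∀ (k : ℕ) (i : Fin (N k)), 2 ≤ k → ‖c k i‖ = 1 - 2 ^ (-(k : ℤ)))
    (hz : ‖z‖ = 1) {m : ℕ} (hm : 2 ≤ m) (hr : r ≤ 2 ^ (-(m : ℤ)) / 2) :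
    volume ((⋃ k ∈ {k : ℕ | 2 ≤ k}, ballLayer c k) ∩ ball z r) ≤
      (∑' j, ENNReal.ofReal (C / (j + m) !)) * volume (ball z r) := by
  have hcover : (⋃ k ∈ {k : ℕ | 2 ≤ k}, ballLayer c k) ∩ ball z r ⊆
      ⋃ j, ballLayer c (j + m) ∩ ball z r := by
    rintro x ⟨hxD, hxz⟩
    simp only [mem_iUnion] at hxD
    obtain ⟨k, hk, hxk⟩ := hxD
    have hmeets := two_zpow_neg_lt_of_ballLayer_inter_ball_nonempty c hz (hc k · hk)
      ⟨x, hxk, hxz⟩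
    have hmk : m ≤ k := by
      have : (2 : ℝ) ^ (-(k : ℤ)) < 2 ^ (-(m : ℤ)) := by linarith
      have := (zpow_lt_zpow_iff_right₀ one_lt_two).1 this
      omega
    refine mem_iUnion.2 ⟨k - m, ?_⟩
    rw [Nat.sub_add_cancel hmk]
    exact ⟨hxk, hxz⟩
  calc _ ≤ ∑' j, volume (ballLayer c (j + m) ∩ ball z r) :=
        (measure_mono hcover).trans (measure_iUnion_le _)
    _ ≤ ∑' j, ENNReal.ofReal (C / (j + m) !) * volume (ball z r) :=
        ENNReal.tsum_le_tsum fun j =>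
          volume_ballLayer_inter_ball_le c hn (hN _) hz (hc _ · (by omega))
    _ = _ := ENNReal.tsum_mul_right

end Layers

lemma tendsto_tsum_ofReal_div_factorial_add (C : ℝ) :
    Tendsto (fun m => ∑' j, ENNReal.ofReal (C / (j + m) !)) atTop (nhds 0) := by
  refine ENNReal.tendsto_sum_nat_add (fun k => ENNReal.ofReal (C / k !)) ?_
  have hsum : Summable fun k : ℕ => C / k ! := by
    simpa [div_eq_mul_inv] using (Real.summable_pow_div_factorial 1).mul_left C
  exact ENNReal.tsum_coe_ne_top_iff_summable.2 hsum.toNNReal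

theorem stmt6_general (n : ℕ) (C : ℝ) (N : ℕ → ℕ)
    (hN : ∀ k : ℕ, (N k : ℝ) ≤ C * (k ! : ℝ) ^ (n - 1))
    (c : (k : ℕ) → Fin (N k) → EuclideanSpace ℝ (Fin n))
    (hc : ∀ (k : ℕ) (i : Fin (N k)), 2 ≤ k → ‖c k i‖ = 1 - 2 ^ (-(k : ℤ)))
    (D : Set (EuclideanSpace ℝ (Fin n)))
    (hD : D = ⋃ k ∈ {k : ℕ | 2 ≤ k}, ⋃ i : Fin (N k),
      closedBall (c k i) ((2 : ℝ) ^ (-(k : ℤ) - 2) * (k ! : ℝ) ^ (-(n : ℤ)))) :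
    ∀ z : EuclideanSpace ℝ (Fin n), ‖z‖ = 1 →
      Tendsto (fun r : ℝ => volume (D ∩ ball z r) / volume (ball z r))
        (nhdsWithin 0 (Ioi 0)) (nhds 0) := by
  intro z hz
  have hn : 1 ≤ n := by
    rcases Nat.eq_zero_or_pos n with rfl | hn
    · simp [Subsingleton.elim z 0] at hz
    · exact hn
  rw [ENNReal.tendsto_nhds_zero]
  intro ε hε
  obtain ⟨m, hmε, hm⟩ := (((tendsto_tsum_ofReal_div_factorial_add C).eventually
    (ge_mem_nhds hε)).and (eventually_ge_atTop 2)).exists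
  filter_upwards [Ioc_mem_nhdsGT (by positivity : (0 : ℝ) < 2 ^ (-(m : ℤ)) / 2)] with r hr
  subst hD
  exact (ENNReal.div_le_of_le_mul
    (volume_biUnion_ballLayer_inter_ball_le c hn hN hc hz hm hr.2)).trans hmε

theorem stmt6 (n : ℕ) (hn : 2 ≤ n) (δ : ℝ) (hδ : 0 < δ) (hδ' : δ ≤ 1 / (n : ℝ) ^ 2)
    (C : ℝ) (hC : 0 < C) (N : ℕ → ℕ)
    (hN : ∀ k : ℕ, (N k : ℝ) ≤ C * (k ! : ℝ) ^ (n - 1))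
    (c : (k : ℕ) → Fin (N k) → EuclideanSpace ℝ (Fin n))
    (hc : ∀ (k : ℕ) (i : Fin (N k)), 2 ≤ k → ‖c k i‖ = 1 - 2 ^ (-(k : ℤ)))
    (D : Set (EuclideanSpace ℝ (Fin n)))
    (hD : D = ⋃ k ∈ {k : ℕ | 2 ≤ k}, ⋃ i : Fin (N k),
      closedBall (c k i) ((2 : ℝ) ^ (-(k : ℤ) - 2) * (k ! : ℝ) ^ (-(n : ℤ)))) :
    ∀ z : EuclideanSpace ℝ (Fin n), ‖z‖ = 1 →
      Tendsto (fun r : ℝ => volume (D ∩ ball z r) / volume (ball z r))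
        (nhdsWithin 0 (Ioi 0)) (nhds 0) :=
  stmt6_general n C N hN c hc D hD
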